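/- arXiv:0705.3522 — 2 statements merged into one kernel-verified Lean document; each statement's English description precedes it below -/
import Mathlib

section
/- Let H be a Hopf algebra with an ad-invariant integral, q a primitive N-th root of unity, and (H, g, χ) a Yetter-Drinfeld datum for q. Then a quadruple (H, g, χ, λ) is a compatible datum for q if and only if: λ ∈ K is arbitrary when χ^N = ε and g^N ∈ Z(H)∖{1}, and λ = 0 otherwise. -/
/-!
An ad-invariant integral `γ` vanishes on every group-like `a ≠ 1`, because
`a γ(a) = Σ a₁ γ(a₂) = γ(a) 1`;
hence `γ(1 - gᴺ) = 1`, and applying `γ` to `χᴺ(h) (1 - gᴺ) = Σ h₁ (1 - gᴺ) S(h₂)` yields `χᴺ = ε`.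
An element `z` satisfies `Σ h₁ z S(h₂) = ε(h) z` for all `h` exactly when it is central: one
direction is the antipode axiom, the other is `h z = Σ h₁ z S(h₂) h₃` (coassociativity).
-/

open TensorProduct

section Defs

variable (K H : Type*) [CommRing K] [Ring H]

/-- The map `h ↦ Σ h₁ * z * S(h₂)` (adjoint-type action on `z`). -/
noncomputable def sweedlerAd [HopfAlgebra K H] (z : H) : H →ₗ[K] H :=
  LinearMap.mul' K H ∘ₗ
    TensorProduct.map LinearMap.id
      (LinearMap.mulLeft K z ∘ₗ HopfAlgebra.antipode (R := K)) ∘ₗ Coalgebra.comul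

/-- `φ(h) = Σ χ(h₁) h₂`. -/
noncomputable def phiMap [Bialgebra K H] (χ : H →ₐ[K] K) : H →ₗ[K] H :=
  (TensorProduct.lid K H).toLinearMap ∘ₗ
    TensorProduct.map χ.toLinearMap LinearMap.id ∘ₗ Coalgebra.comul

/-- `ψ(h) = Σ h₁ χ(h₂)`. -/
noncomputable def psiMap [Bialgebra K H] (χ : H →ₐ[K] K) : H →ₗ[K] H :=
  (TensorProduct.rid K H).toLinearMap ∘ₗ
    TensorProduct.map LinearMap.id χ.toLinearMap ∘ₗ Coalgebra.comul

/-- `h ↦ Σ h₁ f(h₂)` for a linear functional `f`. -/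
noncomputable def psiL [Bialgebra K H] (f : H →ₗ[K] K) : H →ₗ[K] H :=
  (TensorProduct.rid K H).toLinearMap ∘ₗ
    TensorProduct.map LinearMap.id f ∘ₗ Coalgebra.comul

/-- Convolution product of two linear functionals on a coalgebra. -/
noncomputable def conv [Bialgebra K H] (f g : H →ₗ[K] K) : H →ₗ[K] K :=
  LinearMap.mul' K K ∘ₗ TensorProduct.map f g ∘ₗ Coalgebra.comul

/-- `n`-th convolution power of a linear functional, with unit the counit. -/
noncomputable def convPow [Bialgebra K H] (f : H →ₗ[K] K) : ℕ → (H →ₗ[K] K)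
  | 0 => Coalgebra.counit
  | n + 1 => conv K H (convPow f n) f

/-- Group-like element of a bialgebra: `Δ(a) = a ⊗ a` and `ε(a) = 1`. -/
def IsGrouplike [Bialgebra K H] (a : H) : Prop :=
  Coalgebra.comul (R := K) a = a ⊗ₜ[K] a ∧ Coalgebra.counit (R := K) a = 1

/-- An ad-invariant integral on a Hopf algebra:
`γ(1) = 1`, `Σ h₁ γ(h₂) = γ(h)·1`, and `Σ γ(h₁ x S(h₂)) = ε(h) γ(x)`. -/
def IsAdInvariantIntegral [HopfAlgebra K H] (γ : H →ₗ[K] K) : Prop :=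
  γ 1 = 1 ∧ (∀ h : H, psiL K H γ h = γ h • (1 : H)) ∧
    ∀ h x : H, γ (sweedlerAd K H x h) = Coalgebra.counit (R := K) h * γ x

end Defs

/-- Gaussian (q-)binomial coefficient via the q-Pascal recursion
`binom(n+1,k+1)_q = binom(n,k)_q + q^(k+1) binom(n,k+1)_q`. -/
def qBinom {K : Type*} [CommRing K] (q : K) : ℕ → ℕ → K
  | _, 0 => 1
  | 0, _ + 1 => 0
  | n + 1, k + 1 => qBinom q n k + q ^ (k + 1) * qBinom q n (k + 1)

section SweedlerAd

open Coalgebra HopfAlgebra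

variable {K H : Type*} [CommRing K] [Ring H] [HopfAlgebra K H]

lemma Coalgebra.sum_counit_smul_left {h : H} {ι : Type*} (r : Coalgebra.Repr K h ι) :
    ∑ i ∈ r.index, counit (R := K) (r.right i) • r.left i = h := by
  simpa only [map_sum, _root_.TensorProduct.rid_tmul, one_smul]
    using congrArg (_root_.TensorProduct.rid K H) (sum_tmul_counit_eq r)

lemma sweedlerAd_eq_sum {z h : H} {ι : Type*} (r : Coalgebra.Repr K h ι) :
    sweedlerAd K H z h = ∑ i ∈ r.index, r.left i * (z * antipode K (r.right i)) := by
  rw [sweedlerAd, LinearMap.comp_apply, LinearMap.comp_apply, ← r.eq, map_sum, map_sum]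
  simp [TensorProduct.map_tmul, LinearMap.mul'_apply]

lemma sweedlerAd_of_mem_center {z : H} (hz : z ∈ Set.center H) (h : H) :
    sweedlerAd K H z h = counit (R := K) h • z := by
  let r := ℛ K h
  calc sweedlerAd K H z h = (∑ i ∈ r.index, r.left i * antipode K (r.right i)) * z := by
        simp only [sweedlerAd_eq_sum r, Finset.sum_mul, mul_assoc,
          (Semigroup.mem_center_iff.mp hz _).symm]
    _ = counit (R := K) h • z := by rw [sum_mul_antipode_eq_smul r, smul_one_mul]

lemma sum_sweedlerAd_mul (z : H) {h : H} {ι : Type*} (r : Coalgebra.Repr K h ι) :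
    ∑ i ∈ r.index, sweedlerAd K H z (r.left i) * r.right i = h * z := by
  let T : H ⊗[K] (H ⊗[K] H) →ₗ[K] H := LinearMap.mul' K H ∘ₗ
    TensorProduct.map LinearMap.id (LinearMap.mul' K H ∘ₗ
      TensorProduct.map (LinearMap.mulLeft K z ∘ₗ antipode K) LinearMap.id)
  have coassoc := congrArg T
    (sum_tmul_tmul_eq r (fun i => ℛ K (r.left i)) (fun i => ℛ K (r.right i)))
  simp only [T, map_sum, LinearMap.comp_apply, TensorProduct.map_tmul, LinearMap.id_apply,
    LinearMap.mul'_apply, LinearMap.mulLeft_apply, mul_assoc] at coassoc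
  simp only [sweedlerAd_eq_sum (ℛ K (r.left _)), Finset.sum_mul, mul_assoc]
  rw [coassoc]
  simp only [← Finset.mul_sum, sum_antipode_mul_eq_smul, mul_smul_comm, mul_one,
    ← smul_mul_assoc, ← Finset.sum_mul, sum_counit_smul_left r]

lemma mem_center_of_sweedlerAd_eq {z : H}
    (hz : ∀ h, sweedlerAd K H z h = counit (R := K) h • z) : z ∈ Set.center H := by
  refine Semigroup.mem_center_iff.mpr fun h => ?_
  let r := ℛ K h
  calc h * z = ∑ i ∈ r.index, sweedlerAd K H z (r.left i) * r.right i :=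
        (sum_sweedlerAd_mul z r).symm
    _ = z * h := by
        simp only [hz, smul_mul_assoc, ← mul_smul_comm, ← Finset.mul_sum, sum_counit_smul]

theorem sweedlerAd_eq_counit_smul_iff (z : H) :
    (∀ h, sweedlerAd K H z h = counit (R := K) h • z) ↔ z ∈ Set.center H :=
  ⟨mem_center_of_sweedlerAd_eq, sweedlerAd_of_mem_center⟩

end SweedlerAd

namespace IsAdInvariantIntegral

open Coalgebra

variable {K H : Type*} [Field K] [Ring H] [HopfAlgebra K H] {γ : H →ₗ[K] K}

lemma apply_eq_zero_of_comul_eq (hγ : IsAdInvariantIntegral K H γ) {a : H}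
    (ha : comul (R := K) a = a ⊗ₜ[K] a) (ha1 : a ≠ 1) : γ a = 0 := by
  have hinv := hγ.2.1 a
  simp only [psiL, LinearMap.comp_apply, ha, TensorProduct.map_tmul, LinearMap.id_apply,
    LinearEquiv.coe_coe, _root_.TensorProduct.rid_tmul] at hinv
  have : γ a • (a - 1) = 0 := by rw [smul_sub, hinv, sub_self]
  exact (smul_eq_zero.mp this).resolve_right (sub_ne_zero.mpr ha1)

lemma eq_counit_of_smul_eq_sweedlerAd (hγ : IsAdInvariantIntegral K H γ) {f : H →ₗ[K] K}
    {z : H} (hz : γ z ≠ 0) (hf : ∀ h, f h • z = sweedlerAd K H z h) : f = counit := by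
  ext h
  have := congrArg γ (hf h)
  rw [map_smul, hγ.2.2, smul_eq_mul] at this
  exact mul_right_cancel₀ hz this

theorem smul_one_sub_eq_sweedlerAd_iff (hγ : IsAdInvariantIntegral K H γ) {a : H}
    (ha : comul (R := K) a = a ⊗ₜ[K] a) (f : H →ₗ[K] K) :
    (a ≠ 1 ∧ ∀ h, f h • (1 - a) = sweedlerAd K H (1 - a) h) ↔
      (f = counit ∧ a ∈ Set.center H ∧ a ≠ 1) := by
  have one_sub_mem_center_iff : 1 - a ∈ Set.center H ↔ a ∈ Set.center H := by
    simp only [Semigroup.mem_center_iff, mul_sub, sub_mul, mul_one, one_mul, sub_right_inj]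
  constructor
  · rintro ⟨ha1, hf⟩
    have hγ_one_sub : γ (1 - a) ≠ 0 := by
      rw [map_sub, hγ.1, hγ.apply_eq_zero_of_comul_eq ha ha1, sub_zero]
      exact one_ne_zero
    obtain rfl := hγ.eq_counit_of_smul_eq_sweedlerAd hγ_one_sub hf
    have hcenter := (sweedlerAd_eq_counit_smul_iff (K := K) (1 - a)).mp fun h => (hf h).symm
    exact ⟨rfl, one_sub_mem_center_iff.mp hcenter, ha1⟩
  · rintro ⟨rfl, hc, ha1⟩
    exact ⟨ha1, fun h =>
      ((sweedlerAd_eq_counit_smul_iff (1 - a)).mpr (one_sub_mem_center_iff.mpr hc) h).symm⟩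

end IsAdInvariantIntegral

theorem stmt13_general (K H : Type*) [Field K] [Ring H] [HopfAlgebra K H]
    (γ : H →ₗ[K] K) (hγ : IsAdInvariantIntegral K H γ)
    (N : ℕ)
    (g : H) (hg : IsGrouplike K H g)
    (χ : H →ₐ[K] K)
    (lam : K) :
    ((g ^ N = 1 ∨ ∃ h : H, convPow K H χ.toLinearMap N h • (1 - g ^ N) ≠
        sweedlerAd K H (1 - g ^ N) h) → lam = 0) ↔
      ((convPow K H χ.toLinearMap N = Coalgebra.counit ∧
        g ^ N ∈ Set.center H ∧ g ^ N ≠ 1) ∨ lam = 0) := by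
  have hgN : Coalgebra.comul (R := K) (g ^ N) = (g ^ N) ⊗ₜ[K] (g ^ N) := by
    rw [Bialgebra.comul_pow, hg.1, Algebra.TensorProduct.tmul_pow]
  rw [← hγ.smul_one_sub_eq_sweedlerAd_iff hgN]
  simp only [ne_eq, ← not_forall]
  tauto

/-- in the presence of an ad-invariant integral, `(H, g, χ, λ)` is a
compatible datum for `q` iff `λ` is arbitrary when `χᴺ = ε` and `gᴺ ∈ Z(H)∖{1}`,
and `λ = 0` otherwise. -/
theorem stmt13 (K H : Type*) [Field K] [Ring H] [HopfAlgebra K H]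
    (γ : H →ₗ[K] K) (hγ : IsAdInvariantIntegral K H γ)
    (N : ℕ) (q : K) (hq : IsPrimitiveRoot q N)
    (g : H) (hg : IsGrouplike K H g)
    (χ : H →ₐ[K] K) (hχg : χ g = q)
    (hYD : ∀ h : H, g * phiMap K H χ h = psiMap K H χ h * g)
    (lam : K) :
    ((g ^ N = 1 ∨ ∃ h : H, convPow K H χ.toLinearMap N h • (1 - g ^ N) ≠
        sweedlerAd K H (1 - g ^ N) h) → lam = 0) ↔
      ((convPow K H χ.toLinearMap N = Coalgebra.counit ∧
        g ^ N ∈ Set.center H ∧ g ^ N ≠ 1) ∨ lam = 0) :=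
  stmt13_general K H γ hγ N g hg χ lam
end

section
/- Keep the setting of the 72-dimensional Hopf algebra A of the previous example with projection π(Y^i h) = δ_{i,0}h + δ_{i,3}Xh. Define the coaction ρ : R → H ⊗ R by ρ(r) = Σ π(r₍₁₎) ⊗ r₍₂₎. Then ρ(y²) = Γ² ⊗ y² where y = Y ∈ R, while ρ(y⁴) = Γ⁴ ⊗ y⁴ + 2 binom(4,3)_q XΓ ⊗ y (with y⁴ the 4-th power of y in R). Hence ρ(y² ·_R y²) ≠ (Γ² · Γ²) ⊗ (y² ·_R y²), i.e. the multiplication of R is not left H-colinear. -/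
open TensorProduct

/-- `τ(a) = Σ a₁ * S(π(a₂))`. -/
noncomputable def tauMap (K A : Type*) [CommRing K] [Ring A] [HopfAlgebra K A]
    (π : A →ₗ[K] A) : A →ₗ[K] A :=
  LinearMap.mul' K A ∘ₗ
    TensorProduct.map LinearMap.id
      (HopfAlgebra.antipode (R := K) ∘ₗ π) ∘ₗ Coalgebra.comul

/-- Iterated powers of `y` under the twisted multiplication `r ·_R s := τ(r ·_A s)`. -/
noncomputable def powR (K A : Type*) [CommRing K] [Ring A] [HopfAlgebra K A]
    (π : A →ₗ[K] A) (y : A) : ℕ → A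
  | 0 => 1
  | 1 => y
  | n + 2 => tauMap K A π (powR K A π y (n + 1) * y)

/-- The coaction `ρ(r) = Σ π(r₁) ⊗ r₂`. -/
noncomputable def rhoMap (K A : Type*) [CommRing K] [Ring A] [HopfAlgebra K A]
    (π : A →ₗ[K] A) : A →ₗ[K] A ⊗[K] A :=
  TensorProduct.map π LinearMap.id ∘ₗ Coalgebra.comul

/-!
Since `Δ Y = Y ⊗ 1 + Γ ⊗ Y` and `Γ Y = q Y Γ`, the two summands q-commute in `A ⊗ A`, so the
q-binomial theorem gives `Δ (Yⁿ) = ∑ binom(n, j)_q Yⁱ Γʲ ⊗ Yʲ` (`i + j = n`). Applying `π ⊗ id`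
keeps only the terms with `i ∈ {0, 3}`, and `τ` keeps only those with `j ∈ {0, 3}`, using
`S X = -Γ³ X`. Hence `ρ(Y²) = Γ² ⊗ Y²` and, as `τ(Y X) = 0`, `y⁴ = τ(Y⁴) = Y⁴ - binom(4,3)_q Y X`.
Both `ρ(Y⁴)` and `-binom(4,3)_q ρ(Y X)` contribute `binom(4,3)_q XΓ ⊗ Y` to `ρ(y⁴)`. Since
`y² ·_R y² = y⁴`, left colinearity would force `2 binom(4,3)_q XΓ ⊗ Y = 0`; but
`binom(4,3)_q = 2q - 1` squares to `-3`, and `6 ≠ 0` in a field with a primitive 6th root of unity.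
-/

section QBinom

variable {K : Type*} [CommRing K]

@[simp]
lemma qBinom_zero_right (q : K) (n : ℕ) : qBinom q n 0 = 1 := by
  cases n <;> rfl

lemma qBinom_eq_zero_of_lt (q : K) : ∀ {n k : ℕ}, n < k → qBinom q n k = 0
  | 0, _ + 1, _ => rfl
  | n + 1, k + 1, h => by
    rw [qBinom, qBinom_eq_zero_of_lt q (by omega), qBinom_eq_zero_of_lt q (by omega)]
    ring

@[simp]
lemma qBinom_self (q : K) : ∀ n : ℕ, qBinom q n n = 1
  | 0 => rfl
  | n + 1 => by
    rw [qBinom, qBinom_self q n, qBinom_eq_zero_of_lt q (Nat.lt_succ_self n), mul_zero, add_zero]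

lemma qBinom_four_one (q : K) : qBinom q 4 1 = qBinom q 4 3 := by
  simp only [qBinom]
  ring

lemma IsPrimitiveRoot.sq_sub_self_add_one_eq_zero [IsDomain K] {q : K}
    (hq : IsPrimitiveRoot q 6) : q ^ 2 - q + 1 = 0 := by
  simpa [Polynomial.cyclotomic_six] using hq.isRoot_cyclotomic (by norm_num)

lemma IsPrimitiveRoot.qBinom_four_three [IsDomain K] {q : K} (hq : IsPrimitiveRoot q 6) :
    qBinom q 4 3 = 2 * q - 1 := by
  simp only [qBinom]
  linear_combination (q + 2) * hq.sq_sub_self_add_one_eq_zero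

lemma IsPrimitiveRoot.two_mul_qBinom_four_three_ne_zero [IsDomain K] {q : K}
    (hq : IsPrimitiveRoot q 6) : 2 * qBinom q 4 3 ≠ 0 := by
  have h6 : ((2 * 3 : ℕ) : K) ≠ 0 := hq.neZero'.out
  rw [Nat.cast_mul, Nat.cast_ofNat, Nat.cast_ofNat] at h6
  obtain ⟨h2, h3⟩ := mul_ne_zero_iff.mp h6
  refine mul_ne_zero h2 fun h => h3 ?_
  rw [hq.qBinom_four_three] at h
  linear_combination (1 - 2 * q) * h + 4 * hq.sq_sub_self_add_one_eq_zero

end QBinom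

section QBinomialTheorem

open Finset

variable {K R : Type*} [CommRing K] [Semiring R] [Algebra K R] {q : K} {a b : R}

lemma pow_mul_eq_smul_mul_pow (hba : b * a = q • (a * b)) (n : ℕ) :
    b ^ n * a = q ^ n • (a * b ^ n) := by
  induction n with
  | zero => simp
  | succ n ih =>
    rw [pow_succ, mul_assoc, hba, mul_smul_comm, ← mul_assoc, ih, smul_mul_assoc, smul_smul,
      mul_assoc, ← pow_succ, ← pow_succ']

theorem add_pow_eq_sum_qBinom (hba : b * a = q • (a * b)) (n : ℕ) :
    (a + b) ^ n = ∑ p ∈ antidiagonal n, qBinom q n p.2 • (a ^ p.1 * b ^ p.2) := by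
  induction n with
  | zero => simp
  | succ n ih =>
    set g : ℕ × ℕ → R := fun p => (q ^ p.2 * qBinom q n p.2) • (a ^ p.1 * b ^ p.2)
    -- the two ways of peeling the sum of `g` over `antidiagonal (n + 1)`
    have hshift : ∑ p ∈ antidiagonal n, g (p.1 + 1, p.2) =
        g (n + 1, 0) + ∑ p ∈ antidiagonal n, g (p.1, p.2 + 1) := by
      have h := Nat.sum_antidiagonal_succ (f := g) (n := n)
      rw [Nat.sum_antidiagonal_succ'] at h
      simp only [g, qBinom_eq_zero_of_lt q (Nat.lt_succ_self n), mul_zero, zero_smul, zero_add] at h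
      exact h.symm
    calc (a + b) ^ (n + 1)
        = ∑ p ∈ antidiagonal n, (qBinom q n p.2 • (a ^ p.1 * b ^ p.2) * a
            + qBinom q n p.2 • (a ^ p.1 * b ^ p.2) * b) := by
          rw [pow_succ, ih, sum_mul]
          simp only [mul_add]
      _ = ∑ p ∈ antidiagonal n, g (p.1 + 1, p.2)
            + ∑ p ∈ antidiagonal n, qBinom q n p.2 • (a ^ p.1 * b ^ (p.2 + 1)) := by
          rw [sum_add_distrib]
          congr 1 <;> refine sum_congr rfl fun p _ => ?_
          · rw [smul_mul_assoc, mul_assoc, pow_mul_eq_smul_mul_pow hba, mul_smul_comm, smul_smul,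
              ← mul_assoc, ← pow_succ, mul_comm]
          · rw [smul_mul_assoc, mul_assoc, ← pow_succ]
      _ = ∑ p ∈ antidiagonal (n + 1), qBinom q (n + 1) p.2 • (a ^ p.1 * b ^ p.2) := by
          rw [hshift, Nat.sum_antidiagonal_succ']
          simp only [g, qBinom, qBinom_zero_right, add_smul, sum_add_distrib, pow_zero, mul_one,
            one_smul]
          abel

end QBinomialTheorem

lemma TensorProduct.tmul_ne_zero {K V W : Type*} [Field K] [AddCommGroup V] [Module K V]
    [AddCommGroup W] [Module K W] {v : V} {w : W} (hv : v ≠ 0) (hw : w ≠ 0) :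
    v ⊗ₜ[K] w ≠ 0 := by
  obtain ⟨f, hf⟩ := Module.Projective.exists_dual_eq_one K hv
  intro h
  apply hw
  simpa [hf] using
    congrArg ((TensorProduct.lid K W).toLinearMap ∘ₗ TensorProduct.map f LinearMap.id) h

section Hopf

open Coalgebra HopfAlgebra TensorProduct Finset

variable {K A : Type*} [CommRing K] [Ring A] [HopfAlgebra K A]

lemma comul_pow_eq_sum_qBinom {q : K} {g y : A} (hgy : g * y = q • (y * g))
    (hy : comul (R := K) y = y ⊗ₜ 1 + g ⊗ₜ y) (n : ℕ) :
    comul (R := K) (y ^ n) =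
      ∑ p ∈ antidiagonal n, qBinom q n p.2 • ((y ^ p.1 * g ^ p.2) ⊗ₜ[K] (y ^ p.2)) := by
  have hcomm : (g ⊗ₜ[K] y) * (y ⊗ₜ[K] 1) = q • ((y ⊗ₜ[K] 1) * (g ⊗ₜ[K] y)) := by
    simp only [Algebra.TensorProduct.tmul_mul_tmul, hgy, mul_one, one_mul, smul_tmul']
  rw [Bialgebra.comul_pow, hy, add_pow_eq_sum_qBinom hcomm]
  refine sum_congr rfl fun p _ => ?_
  rw [Algebra.TensorProduct.tmul_pow, Algebra.TensorProduct.tmul_pow,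
    Algebra.TensorProduct.tmul_mul_tmul, one_pow, one_mul]

lemma IsGroupLikeElem.antipode_eq_self {g : A} (hg : IsGroupLikeElem K g) (hgg : g * g = 1) :
    antipode K g = g :=
  left_inv_eq_right_inv hg.antipode_mul_cancel hgg

lemma antipode_eq_neg_antipode_mul {g x : A} (hx : comul (R := K) x = g ⊗ₜ x + x ⊗ₜ 1)
    (hεx : counit (R := K) x = 0) : antipode K x = -(antipode K g * x) := by
  have h := mul_antipode_rTensor_comul_apply (R := K) x
  simp only [hx, hεx, map_add, LinearMap.rTensor_tmul, LinearMap.mul'_apply, mul_one,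
    map_zero] at h
  exact eq_neg_of_add_eq_zero_right h

end Hopf

section Example

open Coalgebra HopfAlgebra TensorProduct Finset

variable {K A : Type*} [CommRing K] [Ring A] [HopfAlgebra K A] {q : K} {Γ X Y : A}
  {π : A →ₗ[K] A}

lemma apply_Y_pow_mul_Γ_pow
    (hπ : ∀ h ∈ Algebra.adjoin K ({Γ, X} : Set A), ∀ i : ℕ, i ≤ 5 →
      π (Y ^ i * h) = (if i = 0 then h else 0) + (if i = 3 then X * h else 0))
    {i : ℕ} (hi : i ≤ 5) (j : ℕ) :
    π (Y ^ i * Γ ^ j) = (if i = 0 then Γ ^ j else 0) + (if i = 3 then X * Γ ^ j else 0) :=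
  hπ _ (pow_mem (Algebra.subset_adjoin (by simp)) j) i hi

lemma tauMap_Y_pow (hΓY : Γ * Y = q • (Y * Γ))
    (hΔY : comul (R := K) Y = Y ⊗ₜ[K] 1 + Γ ⊗ₜ[K] Y)
    (hπ : ∀ h ∈ Algebra.adjoin K ({Γ, X} : Set A), ∀ i : ℕ, i ≤ 5 →
      π (Y ^ i * h) = (if i = 0 then h else 0) + (if i = 3 then X * h else 0))
    (hSX : antipode K X = -(Γ ^ 3 * X)) (hΓ6 : Γ ^ 6 = 1) {n : ℕ} (hn : n ≤ 5) :
    tauMap K A π (Y ^ n) = Y ^ n - qBinom q n 3 • (Y ^ (n - 3) * X) := by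
  have hπY : ∀ j ≤ 5, π (Y ^ j) = (if j = 0 then 1 else 0) + (if j = 3 then X else 0) := by
    intro j hj
    simpa using apply_Y_pow_mul_Γ_pow hπ hj 0
  simp only [tauMap, LinearMap.comp_apply, comul_pow_eq_sum_qBinom hΓY hΔY, map_sum, map_smul,
    TensorProduct.map_tmul, LinearMap.mul'_apply, LinearMap.id_coe, id_eq]
  rw [sum_eq_add (n, 0) (n - 3, 3) (by simp) ?_ (by simp) ?_]
  · have hπ1 : π 1 = 1 := by simpa using hπY 0 (by omega)
    have hΓ3X : Γ ^ 3 * (Γ ^ 3 * X) = X := by rw [← mul_assoc, ← pow_add, hΓ6, one_mul]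
    simp [hπY, hπ1, antipode_one, hSX, mul_assoc, hΓ3X, sub_eq_add_neg]
  · rintro ⟨i, j⟩ hij hne
    rw [HasAntidiagonal.mem_antidiagonal] at hij
    rw [hπY j (by omega), if_neg (by grind), if_neg (by grind)]
    simp
  · intro h
    rw [qBinom_eq_zero_of_lt q (by simp at h; omega), zero_smul]

lemma rhoMap_Y_pow (hΓY : Γ * Y = q • (Y * Γ))
    (hΔY : comul (R := K) Y = Y ⊗ₜ[K] 1 + Γ ⊗ₜ[K] Y)
    (hπ : ∀ h ∈ Algebra.adjoin K ({Γ, X} : Set A), ∀ i : ℕ, i ≤ 5 →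
      π (Y ^ i * h) = (if i = 0 then h else 0) + (if i = 3 then X * h else 0))
    {n : ℕ} (hn : n ≤ 5) :
    rhoMap K A π (Y ^ n) = (Γ ^ n) ⊗ₜ[K] (Y ^ n) +
      if 3 ≤ n then qBinom q n (n - 3) • ((X * Γ ^ (n - 3)) ⊗ₜ[K] (Y ^ (n - 3))) else 0 := by
  simp only [rhoMap, LinearMap.comp_apply, comul_pow_eq_sum_qBinom hΓY hΔY, map_sum, map_smul,
    TensorProduct.map_tmul, LinearMap.id_coe, id_eq]
  have hvanish : ∀ p ∈ antidiagonal n, p ≠ (0, n) → p ≠ (3, n - 3) →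
      qBinom q n p.2 • (π (Y ^ p.1 * Γ ^ p.2) ⊗ₜ[K] (Y ^ p.2)) = 0 := by
    rintro ⟨i, j⟩ hij h0 h3
    rw [HasAntidiagonal.mem_antidiagonal] at hij
    rw [apply_Y_pow_mul_Γ_pow hπ (by omega), if_neg (by grind), if_neg (by grind), add_zero,
      zero_tmul, smul_zero]
  split_ifs with h3
  · rw [sum_eq_add_of_mem (0, n) (3, n - 3) (by simp) (by simp; omega) (by simp)
      fun p hp hne => hvanish p hp hne.1 hne.2]
    rw [apply_Y_pow_mul_Γ_pow hπ (by omega : 0 ≤ 5), apply_Y_pow_mul_Γ_pow hπ (by omega : 3 ≤ 5)]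
    simp
  · rw [sum_eq_single_of_mem (0, n) (by simp)
      fun p hp hne => hvanish p hp hne (by rintro rfl; simp at hp; omega)]
    rw [apply_Y_pow_mul_Γ_pow hπ (by omega : 0 ≤ 5)]
    simp

lemma comul_Y_mul_X (hΓX : Γ * X = -(X * Γ))
    (hΔX : comul (R := K) X = (Γ ^ 3) ⊗ₜ[K] X + X ⊗ₜ[K] 1)
    (hΔY : comul (R := K) Y = Y ⊗ₜ[K] 1 + Γ ⊗ₜ[K] Y) :
    comul (R := K) (Y * X) = (Y * Γ ^ 3) ⊗ₜ[K] X + (Y * X) ⊗ₜ[K] 1 + (Γ ^ 4) ⊗ₜ[K] (Y * X)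
      - (X * Γ) ⊗ₜ[K] Y := by
  rw [Bialgebra.comul_mul, hΔY, hΔX]
  simp only [add_mul, mul_add, Algebra.TensorProduct.tmul_mul_tmul, mul_one, one_mul, hΓX,
    neg_tmul, ← pow_succ']
  abel

lemma tauMap_Y_mul_X (hΓX : Γ * X = -(X * Γ))
    (hΔX : comul (R := K) X = (Γ ^ 3) ⊗ₜ[K] X + X ⊗ₜ[K] 1)
    (hΔY : comul (R := K) Y = Y ⊗ₜ[K] 1 + Γ ⊗ₜ[K] Y)
    (hπ : ∀ h ∈ Algebra.adjoin K ({Γ, X} : Set A), ∀ i : ℕ, i ≤ 5 →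
      π (Y ^ i * h) = (if i = 0 then h else 0) + (if i = 3 then X * h else 0))
    (hSX : antipode K X = -(Γ ^ 3 * X)) (hΓ6 : Γ ^ 6 = 1) :
    tauMap K A π (Y * X) = 0 := by
  have hX : X ∈ Algebra.adjoin K ({Γ, X} : Set A) := Algebra.subset_adjoin (by simp)
  have hπ1 : π 1 = 1 := by simpa using hπ 1 (one_mem _) 0 (by omega)
  have hπX : π X = X := by simpa using hπ X hX 0 (by omega)
  have hπY : π Y = 0 := by simpa using hπ 1 (one_mem _) 1 (by omega)
  have hπYX : π (Y * X) = 0 := by simpa using hπ X hX 1 (by omega)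
  have hΓ3X : Γ ^ 3 * (Γ ^ 3 * X) = X := by rw [← mul_assoc, ← pow_add, hΓ6, one_mul]
  simp only [tauMap, LinearMap.comp_apply, comul_Y_mul_X hΓX hΔX hΔY, map_add, map_sub,
    TensorProduct.map_tmul, LinearMap.mul'_apply, LinearMap.id_coe, id_eq, hπ1, hπX, hπY, hπYX,
    antipode_one, hSX, map_zero, mul_one, mul_zero, sub_zero, add_zero, mul_neg, mul_assoc, hΓ3X,
    neg_add_cancel]

lemma rhoMap_Y_mul_X (hΓX : Γ * X = -(X * Γ))
    (hΔX : comul (R := K) X = (Γ ^ 3) ⊗ₜ[K] X + X ⊗ₜ[K] 1)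
    (hΔY : comul (R := K) Y = Y ⊗ₜ[K] 1 + Γ ⊗ₜ[K] Y)
    (hπ : ∀ h ∈ Algebra.adjoin K ({Γ, X} : Set A), ∀ i : ℕ, i ≤ 5 →
      π (Y ^ i * h) = (if i = 0 then h else 0) + (if i = 3 then X * h else 0)) :
    rhoMap K A π (Y * X) = (Γ ^ 4) ⊗ₜ[K] (Y * X) - (X * Γ) ⊗ₜ[K] Y := by
  have hΓ : Γ ∈ Algebra.adjoin K ({Γ, X} : Set A) := Algebra.subset_adjoin (by simp)
  have hX : X ∈ Algebra.adjoin K ({Γ, X} : Set A) := Algebra.subset_adjoin (by simp)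
  have hπYΓ3 : π (Y * Γ ^ 3) = 0 := by simpa using hπ _ (pow_mem hΓ 3) 1 (by omega)
  have hπYX : π (Y * X) = 0 := by simpa using hπ X hX 1 (by omega)
  have hπΓ4 : π (Γ ^ 4) = Γ ^ 4 := by simpa using hπ _ (pow_mem hΓ 4) 0 (by omega)
  have hπXΓ : π (X * Γ) = X * Γ := by simpa using hπ _ (mul_mem hX hΓ) 0 (by omega)
  simp only [rhoMap, LinearMap.comp_apply, comul_Y_mul_X hΓX hΔX hΔY, map_add, map_sub,
    TensorProduct.map_tmul, LinearMap.id_coe, id_eq, hπYΓ3, hπYX, hπΓ4, hπXΓ, zero_tmul,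
    zero_add, add_zero]

lemma powR_Y_two (hΓY : Γ * Y = q • (Y * Γ))
    (hΔY : comul (R := K) Y = Y ⊗ₜ[K] 1 + Γ ⊗ₜ[K] Y)
    (hπ : ∀ h ∈ Algebra.adjoin K ({Γ, X} : Set A), ∀ i : ℕ, i ≤ 5 →
      π (Y ^ i * h) = (if i = 0 then h else 0) + (if i = 3 then X * h else 0))
    (hSX : antipode K X = -(Γ ^ 3 * X)) (hΓ6 : Γ ^ 6 = 1) :
    powR K A π Y 2 = Y ^ 2 := by
  rw [powR, powR, ← sq, tauMap_Y_pow hΓY hΔY hπ hSX hΓ6 (by omega),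
    qBinom_eq_zero_of_lt q (by omega), zero_smul, sub_zero]

lemma powR_Y_four (hΓY : Γ * Y = q • (Y * Γ)) (hXY : X * Y = -(Y * X))
    (hΓX : Γ * X = -(X * Γ)) (hΔX : comul (R := K) X = (Γ ^ 3) ⊗ₜ[K] X + X ⊗ₜ[K] 1)
    (hΔY : comul (R := K) Y = Y ⊗ₜ[K] 1 + Γ ⊗ₜ[K] Y)
    (hπ : ∀ h ∈ Algebra.adjoin K ({Γ, X} : Set A), ∀ i : ℕ, i ≤ 5 →
      π (Y ^ i * h) = (if i = 0 then h else 0) + (if i = 3 then X * h else 0))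
    (hSX : antipode K X = -(Γ ^ 3 * X)) (hΓ6 : Γ ^ 6 = 1) :
    powR K A π Y 4 = tauMap K A π (Y ^ 4) := by
  have h3 : powR K A π Y 3 = Y ^ 3 - X := by
    rw [powR, powR_Y_two hΓY hΔY hπ hSX hΓ6, ← pow_succ,
      tauMap_Y_pow hΓY hΔY hπ hSX hΓ6 (by omega), qBinom_self, one_smul, pow_zero, one_mul]
  rw [powR, h3, sub_mul, ← pow_succ, hXY, sub_neg_eq_add, map_add,
    tauMap_Y_mul_X hΓX hΔX hΔY hπ hSX hΓ6, add_zero]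

lemma rhoMap_tauMap_Y_pow_four (hΓY : Γ * Y = q • (Y * Γ))
    (hΓX : Γ * X = -(X * Γ)) (hΔX : comul (R := K) X = (Γ ^ 3) ⊗ₜ[K] X + X ⊗ₜ[K] 1)
    (hΔY : comul (R := K) Y = Y ⊗ₜ[K] 1 + Γ ⊗ₜ[K] Y)
    (hπ : ∀ h ∈ Algebra.adjoin K ({Γ, X} : Set A), ∀ i : ℕ, i ≤ 5 →
      π (Y ^ i * h) = (if i = 0 then h else 0) + (if i = 3 then X * h else 0))
    (hSX : antipode K X = -(Γ ^ 3 * X)) (hΓ6 : Γ ^ 6 = 1) :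
    rhoMap K A π (tauMap K A π (Y ^ 4)) =
      (Γ ^ 4) ⊗ₜ[K] tauMap K A π (Y ^ 4) + (2 * qBinom q 4 3) • ((X * Γ) ⊗ₜ[K] Y) := by
  rw [tauMap_Y_pow hΓY hΔY hπ hSX hΓ6 (by omega), map_sub, map_smul,
    rhoMap_Y_pow hΓY hΔY hπ (by omega), if_pos (by omega)]
  simp only [Nat.reduceSub, pow_one, rhoMap_Y_mul_X hΓX hΔX hΔY hπ, qBinom_four_one, tmul_sub,
    tmul_smul]
  module

end Example

theorem stmt17_general
    (K A : Type*) [Field K] [Ring A] [HopfAlgebra K A]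
    (q : K) (hq : IsPrimitiveRoot q 6)
    (Γ X Y : A)
    (hind : LinearIndependent K (fun p : Fin 6 × Fin 2 × Fin 6 =>
      Y ^ (p.1 : ℕ) * X ^ (p.2.1 : ℕ) * Γ ^ (p.2.2 : ℕ)))
    (hΓ6 : Γ ^ 6 = 1)
    (hΓY : Γ * Y = q • (Y * Γ)) (hXY : X * Y = -(Y * X)) (hΓX : Γ * X = -(X * Γ))
    (hΔΓ : Coalgebra.comul (R := K) Γ = Γ ⊗ₜ[K] Γ)
    (hΔX : Coalgebra.comul (R := K) X = (Γ ^ 3) ⊗ₜ[K] X + X ⊗ₜ[K] 1)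
    (hΔY : Coalgebra.comul (R := K) Y = Y ⊗ₜ[K] 1 + Γ ⊗ₜ[K] Y)
    (hεΓ : Coalgebra.counit (R := K) Γ = 1)
    (hεX : Coalgebra.counit (R := K) X = 0)
    (π : A →ₗ[K] A)
    (hπ : ∀ h ∈ Algebra.adjoin K ({Γ, X} : Set A), ∀ i : ℕ, i ≤ 5 →
      π (Y ^ i * h) = (if i = 0 then h else 0) + (if i = 3 then X * h else 0))
    :
    rhoMap K A π (powR K A π Y 2) = (Γ ^ 2) ⊗ₜ[K] powR K A π Y 2 ∧
    rhoMap K A π (powR K A π Y 4) =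
      (Γ ^ 4) ⊗ₜ[K] powR K A π Y 4 +
        (2 * qBinom q 4 3) • ((X * Γ) ⊗ₜ[K] Y) ∧
    rhoMap K A π (tauMap K A π (powR K A π Y 2 * powR K A π Y 2)) ≠
      (Γ ^ 2 * Γ ^ 2) ⊗ₜ[K]
        tauMap K A π (powR K A π Y 2 * powR K A π Y 2) := by
  have hSX : HopfAlgebra.antipode K X = -(Γ ^ 3 * X) := by
    have hΓ3 : IsGroupLikeElem K (Γ ^ 3) := IsGroupLikeElem.pow ⟨hεΓ, hΔΓ⟩
    rw [antipode_eq_neg_antipode_mul hΔX hεX, hΓ3.antipode_eq_self (by rw [← pow_add, hΓ6])]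
  have hy2 := powR_Y_two hΓY hΔY hπ hSX hΓ6
  have hy4 := powR_Y_four hΓY hXY hΓX hΔX hΔY hπ hSX hΓ6
  have hρy4 := rhoMap_tauMap_Y_pow_four hΓY hΓX hΔX hΔY hπ hSX hΓ6
  have hdefect : (2 * qBinom q 4 3) • ((X * Γ) ⊗ₜ[K] Y) ≠ 0 :=
    smul_ne_zero hq.two_mul_qBinom_four_three_ne_zero <| TensorProduct.tmul_ne_zero
      (by simpa using hind.ne_zero (0, 1, 1)) (by simpa using hind.ne_zero (1, 0, 0))
  refine ⟨by simpa [hy2] using rhoMap_Y_pow hΓY hΔY hπ (n := 2) (by omega),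
    by rw [hy4, hρy4], ?_⟩
  rw [hy2, ← pow_add, hρy4, ← pow_add]
  exact fun h => hdefect (add_eq_left.mp h)

/-- for the coaction `ρ(r) = Σ π(r₁) ⊗ r₂` one has
`ρ(y²) = Γ² ⊗ y²` but `ρ(y⁴) = Γ⁴ ⊗ y⁴ + 2·binom(4,3)_q XΓ ⊗ y`; hence
`ρ(y² ·_R y²) ≠ Γ²Γ² ⊗ (y² ·_R y²)`, i.e. the multiplication of `R` is not
left `H`-colinear. -/
theorem stmt17
    (K A : Type*) [Field K] [CharZero K] [Ring A] [HopfAlgebra K A]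
    (q : K) (hq : IsPrimitiveRoot q 6)
    (Γ X Y : A)
    (hind : LinearIndependent K (fun p : Fin 6 × Fin 2 × Fin 6 =>
      Y ^ (p.1 : ℕ) * X ^ (p.2.1 : ℕ) * Γ ^ (p.2.2 : ℕ)))
    (hΓ6 : Γ ^ 6 = 1) (hX2 : X ^ 2 = 0) (hY6 : Y ^ 6 = 0)
    (hΓY : Γ * Y = q • (Y * Γ)) (hXY : X * Y = -(Y * X)) (hΓX : Γ * X = -(X * Γ))
    (hΔΓ : Coalgebra.comul (R := K) Γ = Γ ⊗ₜ[K] Γ)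
    (hΔX : Coalgebra.comul (R := K) X = (Γ ^ 3) ⊗ₜ[K] X + X ⊗ₜ[K] 1)
    (hΔY : Coalgebra.comul (R := K) Y = Y ⊗ₜ[K] 1 + Γ ⊗ₜ[K] Y)
    (hεΓ : Coalgebra.counit (R := K) Γ = 1)
    (hεX : Coalgebra.counit (R := K) X = 0)
    (hεY : Coalgebra.counit (R := K) Y = 0)
    (π : A →ₗ[K] A)
    (hπ : ∀ h ∈ Algebra.adjoin K ({Γ, X} : Set A), ∀ i : ℕ, i ≤ 5 →
      π (Y ^ i * h) = (if i = 0 then h else 0) + (if i = 3 then X * h else 0))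
    :
    rhoMap K A π (powR K A π Y 2) = (Γ ^ 2) ⊗ₜ[K] powR K A π Y 2 ∧
    rhoMap K A π (powR K A π Y 4) =
      (Γ ^ 4) ⊗ₜ[K] powR K A π Y 4 +
        (2 * qBinom q 4 3) • ((X * Γ) ⊗ₜ[K] Y) ∧
    rhoMap K A π (tauMap K A π (powR K A π Y 2 * powR K A π Y 2)) ≠
      (Γ ^ 2 * Γ ^ 2) ⊗ₜ[K]
        tauMap K A π (powR K A π Y 2 * powR K A π Y 2) :=
  stmt17_general K A q hq Γ X Y hind hΓ6 hΓY hXY hΓX hΔΓ hΔX hΔY hεΓ hεX π hπ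
end
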